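/- arXiv:1705.02822 — 2 statements merged into one kernel-verified Lean document; each statement's English description precedes it below -/
import Mathlib

section
/- Let P = (H, M) be a pair of a finite graph H and a linear matroid M whose ground set of vectors is in bijection with V(H), and let v ∈ V(H) be such that the vector v_M is a coloop of M. Let M' be obtained from M by replacing v_M with a vector v_{M'} in general position on a flat containing the span of the neighbors of v. Then τ(H, M') = τ(H, M), where τ(H, M) = min{ rank_M(S) : S a vertex cover of H }. -/
variable {F : Type*} [Field F] {V : Type*} {d : ℕ}

/-- The rank of a set of vertices: the dimension of the span of its vectors. -/
noncomputable def vecRank (F : Type*) [Field F] {V : Type*} {d : ℕ}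
    (φ : V → (Fin d → F)) (S : Set V) : ℕ :=
  Module.finrank F (Submodule.span F (φ '' S))

/-- The vertex cover number of a graph-linear-matroid pair: the minimum rank of a
vertex cover. -/
noncomputable def tauVec (F : Type*) [Field F] {V : Type*} {d : ℕ}
    (H : SimpleGraph V) (φ : V → (Fin d → F)) : ℕ :=
  sInf {n | ∃ S : Set V, (∀ a b, H.Adj a b → a ∈ S ∨ b ∈ S) ∧ vecRank F φ S = n}

/-- A set of ground elements is a flat if it contains every element whose vector
lies in its span. -/
def IsVecFlat (F : Type*) [Field F] {V : Type*} {d : ℕ}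
    (φ : V → (Fin d → F)) (Fl : Set V) : Prop :=
  ∀ w : V, φ w ∈ Submodule.span F (φ '' Fl) → w ∈ Fl

/-- `v` is in general position on the flat `Fl`: it belongs to `Fl`, and whenever its
vector lies in the span of a flat `F'` minus `v`, the whole of `Fl` is contained in `F'`. -/
def InGeneralPosition (F : Type*) [Field F] {V : Type*} {d : ℕ}
    (φ : V → (Fin d → F)) (v : V) (Fl : Set V) : Prop :=
  v ∈ Fl ∧ ∀ F' : Set V, IsVecFlat F φ F' →
    φ v ∈ Submodule.span F (φ '' (F' \ {v})) → Fl ⊆ F'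

-- helper lemmas
section helpers
variable {K W : Type*} [Field K] [AddCommGroup W] [Module K W] [FiniteDimensional K W]

lemma finrank_span_insert_le (a : W) (s : Set W) :
    Module.finrank K (Submodule.span K (insert a s)) ≤
      Module.finrank K (Submodule.span K s) + 1 := by
  rw [Submodule.span_insert]
  have h := Submodule.finrank_sup_add_finrank_inf_eq (Submodule.span K {a}) (Submodule.span K s)
  have h1 : Module.finrank K (Submodule.span K ({a} : Set W)) ≤ 1 := by
    by_cases ha : a = 0
    · subst ha
      rw [Set.singleton_zero, Submodule.span_zero]
      simp
    · rw [finrank_span_singleton ha]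
  omega

lemma finrank_span_insert_of_not_mem {a : W} {s : Set W}
    (h : a ∉ Submodule.span K s) :
    Module.finrank K (Submodule.span K (insert a s)) =
      Module.finrank K (Submodule.span K s) + 1 := by
  have ha : a ≠ 0 := fun h0 => h (h0 ▸ (Submodule.span K s).zero_mem)
  have hd : Disjoint (Submodule.span K ({a} : Set W)) (Submodule.span K s) :=
    ((Submodule.disjoint_span_singleton' ha).2 h).symm
  rw [Submodule.span_insert]
  have heq := Submodule.finrank_sup_add_finrank_inf_eq (Submodule.span K {a}) (Submodule.span K s)
  rw [hd.eq_bot] at heq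
  rw [finrank_span_singleton ha] at heq
  simp only [finrank_bot] at heq
  omega

end helpers

lemma image_update_of_not_mem {φ : V → (Fin d → F)} {v : V} {x : Fin d → F}
    [DecidableEq V] {S : Set V} (hv : v ∉ S) :
    Function.update φ v x '' S = φ '' S :=
  Set.image_congr fun a ha => Function.update_of_ne (by rintro rfl; exact hv ha) _ _

lemma image_of_mem {ψ : V → (Fin d → F)} {v : V} {S : Set V} (hv : v ∈ S) :
    ψ '' S = insert (ψ v) (ψ '' (S \ {v})) := by
  conv_lhs => rw [show S = insert v (S \ {v}) by
    rw [Set.insert_diff_singleton, Set.insert_eq_self.2 hv]]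
  rw [Set.image_insert_eq]

lemma vecRank_of_coloop {ψ : V → (Fin d → F)} {v : V} {S : Set V} (hv : v ∈ S)
    (hc : ψ v ∉ Submodule.span F (ψ '' (S \ {v}))) :
    vecRank F ψ S = vecRank F ψ (S \ {v}) + 1 := by
  unfold vecRank
  rw [image_of_mem hv, finrank_span_insert_of_not_mem hc]

lemma tauVec_le_tauVec {H : SimpleGraph V} {ψ χ : V → (Fin d → F)}
    (h : ∀ S : Set V, (∀ a b, H.Adj a b → a ∈ S ∨ b ∈ S) →
      ∃ T : Set V, (∀ a b, H.Adj a b → a ∈ T ∨ b ∈ T) ∧ vecRank F χ T ≤ vecRank F ψ S) :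
    tauVec F H χ ≤ tauVec F H ψ := by
  have hne : {n | ∃ S : Set V, (∀ a b, H.Adj a b → a ∈ S ∨ b ∈ S) ∧ vecRank F ψ S = n}.Nonempty :=
    ⟨vecRank F ψ Set.univ, Set.univ, fun a b _ => Or.inl trivial, rfl⟩
  obtain ⟨S, hS, hrank⟩ := Nat.sInf_mem hne
  obtain ⟨T, hT, hle⟩ := h S hS
  calc tauVec F H χ ≤ vecRank F χ T := Nat.sInf_le ⟨T, hT, rfl⟩
    _ ≤ vecRank F ψ S := hle
    _ = tauVec F H ψ := hrank


/-- Moving the vector of a coloop vertex `v` into general position on a flat containing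
the neighbors of `v` does not change the vertex cover number `τ`. -/
theorem tau_eq_of_move_to_general_position [Finite V] [DecidableEq V]
    (H : SimpleGraph V) (φ : V → (Fin d → F)) (v : V)
    (hcoloop : φ v ∉ Submodule.span F (φ '' {w | w ≠ v}))
    (x : Fin d → F) (Fl : Set V)
    (hFlat : IsVecFlat F (Function.update φ v x) Fl)
    (hNbr : H.neighborSet v ⊆ Fl)
    (hgp : InGeneralPosition F (Function.update φ v x) v Fl) :
    tauVec F H (Function.update φ v x) = tauVec F H φ := by
  set φ' := Function.update φ v x with hφ'
  have hφ'v : φ' v = x := Function.update_self v x φ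
  have hcol : ∀ S : Set V, v ∈ S → φ v ∉ Submodule.span F (φ '' (S \ {v})) := by
    intro S hv hmem
    exact hcoloop (Submodule.span_mono (Set.image_mono (f := φ) (fun w hw => hw.2)) hmem)
  have himg : ∀ S : Set V, v ∉ S → φ' '' S = φ '' S := fun S hv =>
    image_update_of_not_mem hv
  apply le_antisymm
  · -- τ' ≤ τ
    apply tauVec_le_tauVec
    intro S hS
    refine ⟨S, hS, ?_⟩
    by_cases hv : v ∈ S
    · have h1 : vecRank F φ S = vecRank F φ (S \ {v}) + 1 :=
        vecRank_of_coloop hv (hcol S hv)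
      have h2 : vecRank F φ' S ≤ vecRank F φ' (S \ {v}) + 1 := by
        unfold vecRank
        rw [image_of_mem hv]
        exact finrank_span_insert_le _ _
      have h3 : vecRank F φ' (S \ {v}) = vecRank F φ (S \ {v}) := by
        unfold vecRank; rw [himg _ (fun h => h.2 rfl)]
      omega
    · unfold vecRank; rw [himg _ hv]
  · -- τ ≤ τ'
    apply tauVec_le_tauVec
    intro S hS
    by_cases hv : v ∈ S
    · have hsd : φ' '' (S \ {v}) = φ '' (S \ {v}) := himg _ (fun h => h.2 rfl)
      by_cases hx : x ∈ Submodule.span F (φ '' (S \ {v}))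
      · -- general position case
        set T : Set V := (S \ {v}) ∪ H.neighborSet v with hT
        have hTcov : ∀ a b, H.Adj a b → a ∈ T ∨ b ∈ T := by
          intro a b hab
          rcases hS a b hab with h | h
          · by_cases hav : a = v
            · subst hav; right; exact Or.inr hab
            · left; exact Or.inl ⟨h, hav⟩
          · by_cases hbv : b = v
            · subst hbv; left; exact Or.inr hab.symm
            · right; exact Or.inl ⟨h, hbv⟩
        have hvT : v ∉ T := by
          rintro (⟨_, h⟩ | h)
          · exact h rfl
          · exact H.irrefl h
        -- the flat F'
        set F' : Set V := {w | φ' w ∈ Submodule.span F (φ '' (S \ {v}))} with hF'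
        have hF'span : Submodule.span F (φ' '' F') ≤ Submodule.span F (φ '' (S \ {v})) := by
          rw [Submodule.span_le]
          rintro _ ⟨w, hw, rfl⟩
          exact hw
        have hF'flat : IsVecFlat F φ' F' := by
          intro w hw
          have h2 := hF'span hw
          rw [hF']
          exact h2
        have hsub : S \ {v} ⊆ F' \ {v} := by
          intro w hw
          refine ⟨?_, hw.2⟩
          rw [hF', Set.mem_setOf_eq, hφ', Function.update_of_ne hw.2]
          exact Submodule.subset_span (Set.mem_image_of_mem φ hw)
        have hxF' : φ' v ∈ Submodule.span F (φ' '' (F' \ {v})) := by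
          rw [hφ'v]
          refine Submodule.span_mono (Set.image_mono (f := φ') hsub) ?_
          rw [hsd]; exact hx
        have hFlF' : Fl ⊆ F' := hgp.2 F' hF'flat hxF'
        have hNF' : ∀ w ∈ H.neighborSet v, φ w ∈ Submodule.span F (φ '' (S \ {v})) := by
          intro w hw
          have hwv : w ≠ v := fun h => H.irrefl (h ▸ hw)
          have h3 := hFlF' (hNbr hw)
          rw [hF', Set.mem_setOf_eq, hφ', Function.update_of_ne hwv] at h3
          exact h3
        have hTspan : Submodule.span F (φ '' T) = Submodule.span F (φ '' (S \ {v})) := by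
          apply le_antisymm
          · rw [Submodule.span_le]
            rintro _ ⟨w, hw | hw, rfl⟩
            · exact Submodule.subset_span (Set.mem_image_of_mem φ hw)
            · exact hNF' w hw
          · exact Submodule.span_mono (Set.image_mono (f := φ) Set.subset_union_left)
        have hS'span : vecRank F φ' S = vecRank F φ' (S \ {v}) := by
          unfold vecRank
          rw [image_of_mem hv, hφ'v, hsd, Submodule.span_insert_eq_span hx]
        refine ⟨T, hTcov, ?_⟩
        have : vecRank F φ T = vecRank F φ (S \ {v}) := by
          unfold vecRank; rw [hTspan]
        rw [this, hS'span]
        unfold vecRank; rw [hsd]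
      · -- x independent case: use S itself
        refine ⟨S, hS, le_of_eq ?_⟩
        have h1 : vecRank F φ S = vecRank F φ (S \ {v}) + 1 :=
          vecRank_of_coloop hv (hcol S hv)
        have h2 : vecRank F φ' S = vecRank F φ' (S \ {v}) + 1 := by
          apply vecRank_of_coloop hv
          rw [hφ'v, hsd]; exact hx
        have h3 : vecRank F φ' (S \ {v}) = vecRank F φ (S \ {v}) := by
          unfold vecRank; rw [hsd]
        omega
    · exact ⟨S, hS, le_of_eq (by unfold vecRank; rw [himg _ hv])⟩
end

section
/- Let P = (H, M) be a pair of a finite graph H and a matroid M on ground set V(H), and let v ∈ V(H) be a non-loop element that lies in the closure of its set of graph-neighbors N_H(v). Then τ(P/v) = τ(P) − 1, where P/v = (H − v, M/v). -/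
/-- The rank of a set in a matroid: the maximum size of an independent subset. -/
noncomputable def matroidRank {α : Type*} (M : Matroid α) (X : Set α) : ℕ :=
  sSup {n | ∃ I, I ⊆ X ∧ M.Indep I ∧ I.ncard = n}

/-- The vertex cover number `τ` of a graph-matroid pair: the minimum matroid rank
of a vertex cover of the graph. -/
noncomputable def tauPair {α : Type*} (G : SimpleGraph α) (M : Matroid α) : ℕ :=
  sInf {n | ∃ S : Set α, S ⊆ M.E ∧ (∀ a b, G.Adj a b → a ∈ S ∨ b ∈ S) ∧ matroidRank M S = n}

section Aux

variable {α : Type*} [Fintype α] {M : Matroid α} {I J X : Set α}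

lemma ncard_le_fincard (I : Set α) : I.ncard ≤ Fintype.card α :=
  le_trans (Set.ncard_le_ncard (Set.subset_univ I) Set.finite_univ)
    (by rw [Set.ncard_univ, Nat.card_eq_fintype_card])

lemma ncard_le_matroidRank (hJ : M.Indep J) (hJX : J ⊆ X) : J.ncard ≤ matroidRank M X := by
  apply le_csSup
  · exact ⟨Fintype.card α, by rintro n ⟨I, -, -, rfl⟩; exact ncard_le_fincard I⟩
  · exact ⟨J, hJX, hJ, rfl⟩

lemma matroidRank_eq_of_basis (hI : M.IsBasis I X) : matroidRank M X = I.ncard := by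
  refine IsGreatest.csSup_eq ⟨⟨I, hI.subset, hI.indep, rfl⟩, ?_⟩
  rintro n ⟨J, hJX, hJ, rfl⟩
  obtain ⟨J', hJ', hJJ'⟩ := hJ.subset_isBasis_of_subset hJX hI.subset_ground
  have h1 : J.ncard ≤ J'.ncard := Set.ncard_le_ncard hJJ' J'.toFinite
  have h2 : J'.ncard = I.ncard := by
    have h := hJ'.encard_eq_encard hI
    rw [Set.ncard_def, Set.ncard_def, h]
  omega

lemma matroidRank_insert_of_mem_closure (hME : M.E = Set.univ) {v : α}
    (h : v ∈ M.closure X) : matroidRank M (insert v X) = matroidRank M X := by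
  have hX : X ⊆ M.E := by rw [hME]; exact Set.subset_univ _
  obtain ⟨I, hI⟩ := M.exists_isBasis X hX
  have h2 : M.IsBasis I (insert v X) :=
    hI.isBasis_closure_right.isBasis_subset (hI.subset.trans (Set.subset_insert _ _))
      (Set.insert_subset h (M.subset_closure X hX))
  rw [matroidRank_eq_of_basis h2, matroidRank_eq_of_basis hI]

lemma matroidRank_contract (hME : M.E = Set.univ) {N : Matroid α} {v : α}
    (hv_nonloop : M.Indep {v})
    (hNI : ∀ I : Set α, N.Indep I ↔ v ∉ I ∧ M.Indep (insert v I))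
    {S : Set α} (hvS : v ∉ S) :
    matroidRank N S + 1 = matroidRank M (insert v S) := by
  have ground : insert v S ⊆ M.E := by rw [hME]; exact Set.subset_univ _
  obtain ⟨J, hJ, hvJ⟩ := hv_nonloop.subset_isBasis_of_subset
    (Set.singleton_subset_iff.mpr (Set.mem_insert v S)) ground
  have hvJ' : v ∈ J := hvJ rfl
  have hNrank : matroidRank N S = (J \ {v}).ncard := by
    refine IsGreatest.csSup_eq ⟨⟨J \ {v}, ?_, ?_, rfl⟩, ?_⟩
    · intro x hx
      rcases hJ.subset hx.1 with h | h
      · exact absurd h hx.2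
      · exact h
    · rw [hNI]
      refine ⟨fun h => h.2 rfl, ?_⟩
      rw [Set.insert_diff_singleton, Set.insert_eq_of_mem hvJ']
      exact hJ.indep
    · rintro n ⟨K, hKS, hK, rfl⟩
      rw [hNI] at hK
      obtain ⟨hvK, hK⟩ := hK
      have hle : (insert v K).ncard ≤ matroidRank M (insert v S) :=
        ncard_le_matroidRank hK (Set.insert_subset_insert hKS)
      rw [matroidRank_eq_of_basis hJ] at hle
      rw [Set.ncard_insert_of_notMem hvK K.toFinite] at hle
      have h2 : (J \ {v}).ncard + 1 = J.ncard :=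
        Set.ncard_diff_singleton_add_one hvJ' J.toFinite
      omega
  rw [hNrank, matroidRank_eq_of_basis hJ]
  exact Set.ncard_diff_singleton_add_one hvJ' J.toFinite

lemma deleteEdges_incidenceSet_adj (H : SimpleGraph α) (v a b : α) :
    (H.deleteEdges (H.incidenceSet v)).Adj a b ↔ H.Adj a b ∧ a ≠ v ∧ b ≠ v := by
  simp only [SimpleGraph.deleteEdges_adj, SimpleGraph.mk'_mem_incidenceSet_iff]
  constructor
  · rintro ⟨hadj, hni⟩
    refine ⟨hadj, ?_, ?_⟩ <;> rintro rfl <;> exact hni ⟨hadj, by tauto⟩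
  · rintro ⟨hadj, ha, hb⟩
    exact ⟨hadj, by rintro ⟨-, rfl | rfl⟩ <;> simp_all⟩

end Aux

/-- If `v` is a non-loop element of the matroid `M` on ground set `V(H)` that lies in
the closure of its graph-neighborhood, then `τ(P/v) = τ(P) - 1`, where
`P/v = (H - v, M/v)` (the contraction `M/v` is described by its ground set and
independent sets, and `H - v` is `H` with all edges at `v` deleted). -/
theorem tau_contract_of_mem_closure_neighbors {α : Type*} [Fintype α]
    (H : SimpleGraph α) (M N : Matroid α) (hME : M.E = Set.univ)
    (v : α) (hv_nonloop : M.Indep {v})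
    (hcl : v ∈ M.closure (H.neighborSet v))
    (hNE : N.E = M.E \ {v})
    (hNI : ∀ I : Set α, N.Indep I ↔ v ∉ I ∧ M.Indep (insert v I)) :
    tauPair (H.deleteEdges (H.incidenceSet v)) N = tauPair H M - 1 := by
  set H' := H.deleteEdges (H.incidenceSet v) with hH'
  -- the defining sets
  set A := {n | ∃ S : Set α, S ⊆ M.E ∧ (∀ a b, H.Adj a b → a ∈ S ∨ b ∈ S) ∧ matroidRank M S = n}
    with hA
  set B := {n | ∃ S : Set α, S ⊆ N.E ∧ (∀ a b, H'.Adj a b → a ∈ S ∨ b ∈ S) ∧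
      matroidRank N S = n} with hB
  have hAne : A.Nonempty := by
    refine ⟨matroidRank M Set.univ, Set.univ, by rw [hME], fun a b _ => Or.inl trivial, rfl⟩
  have hBne : B.Nonempty := by
    refine ⟨matroidRank N N.E, N.E, le_refl _, fun a b hab => ?_, rfl⟩
    rw [deleteEdges_incidenceSet_adj] at hab
    left
    rw [hNE, hME]
    exact ⟨trivial, hab.2.1⟩
  have hτA : tauPair H M = sInf A := rfl
  have hτB : tauPair H' N = sInf B := rfl
  -- Step 1: tauPair H' N + 1 ≥ ... get optimal S for H, M
  obtain ⟨S, hSE, hScov, hSr⟩ := Nat.sInf_mem hAne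
  obtain ⟨S', hS'E, hS'cov, hS'r⟩ := Nat.sInf_mem hBne
  -- direction 1 : sInf B ≤ sInf A - 1
  have hvS' : v ∉ S' := by
    intro h
    have := hS'E h
    rw [hNE] at this
    exact this.2 rfl
  have step2 : sInf A ≤ sInf B + 1 := by
    apply Nat.sInf_le
    refine ⟨insert v S', by rw [hME]; exact Set.subset_univ _, ?_, ?_⟩
    · intro a b hab
      by_cases ha : a = v
      · exact Or.inl (ha ▸ Set.mem_insert _ _)
      by_cases hb : b = v
      · exact Or.inr (hb ▸ Set.mem_insert _ _)
      have : H'.Adj a b := by rw [hH', deleteEdges_incidenceSet_adj]; exact ⟨hab, ha, hb⟩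
      rcases hS'cov a b this with h | h
      · exact Or.inl (Set.mem_insert_of_mem _ h)
      · exact Or.inr (Set.mem_insert_of_mem _ h)
    · rw [← matroidRank_contract hME hv_nonloop hNI hvS', hS'r]
  have step1 : sInf B + 1 ≤ sInf A := by
    have hvS'' : v ∉ S \ {v} := fun h => h.2 rfl
    have hins : insert v (S \ {v}) = insert v S := by
      rw [Set.insert_diff_singleton]
    have hrS : matroidRank M (insert v S) = matroidRank M S := by
      by_cases hvS : v ∈ S
      · rw [Set.insert_eq_of_mem hvS]
      · have hsub : H.neighborSet v ⊆ S := by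
          intro u hu
          rcases hScov v u hu with h | h
          · exact absurd h hvS
          · exact h
        exact matroidRank_insert_of_mem_closure hME
          ((M.closure_subset_closure hsub) hcl)
    have hmem : matroidRank N (S \ {v}) ∈ B := by
      refine ⟨S \ {v}, ?_, ?_, rfl⟩
      · rw [hNE, hME]
        exact fun x hx => ⟨trivial, hx.2⟩
      · intro a b hab
        rw [hH', deleteEdges_incidenceSet_adj] at hab
        rcases hScov a b hab.1 with h | h
        · exact Or.inl ⟨h, hab.2.1⟩
        · exact Or.inr ⟨h, hab.2.2⟩
    have hcontr : matroidRank N (S \ {v}) + 1 = matroidRank M (insert v S) := by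
      rw [← hins]
      exact matroidRank_contract hME hv_nonloop hNI hvS''
    have h1 : sInf B ≤ matroidRank N (S \ {v}) := Nat.sInf_le hmem
    omega
  rw [hτA, hτB]
  omega
end
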